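/- arXiv:2407.02463 — 2 statements merged into one kernel-verified Lean document; each statement's English description precedes it below -/
import Mathlib

section
/- If a hyperreal field R* is an ordered field extension of ℝ containing an infinite element N in its hypernatural part, then the collection μ = {X ⊆ ℕ : N ∈ X*} is a nonprincipal ultrafilter on ℕ, where X* denotes the transfer of X. In particular, the existence of such a structure with the transfer principle implies the existence of a nonprincipal ultrafilter on ℕ. -/
open FirstOrder Language Cardinal

universe u v w

/-- The language of the structure (ℝ; +, ·, <, (A)_{A ⊆ ℕ}): binary functions for
addition and multiplication, a binary order relation, and a unary predicate for
every subset of ℕ. -/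
def natSetLang : FirstOrder.Language :=
  ⟨fun n => match n with | 2 => Fin 2 | _ => Empty,
   fun n => match n with | 1 => Set ℕ | 2 => Unit | _ => Empty⟩

instance : natSetLang.Structure ℝ where
  funMap {n} f x :=
    match n, f with
    | 2, f => if (show Fin 2 from f).val = 0 then x 0 + x 1 else x 0 * x 1
    | 0, f => f.elim
    | 1, f => f.elim
    | _+3, f => f.elim
  RelMap {n} r x :=
    match n, r with
    | 1, A => ∃ k ∈ (show Set ℕ from A), (k : ℝ) = x 0
    | 2, _ => x 0 < x 1
    | 0, r => r.elim
    | _+3, r => r.elim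

/-!
Every Boolean fact about subsets of `ℕ` that makes `μ` an ultrafilter (monotonicity and
intersections of the `X*`, `∅* = ∅`, and `N ∈ ℕ*` lying in `X*` or in `(Xᶜ)*`) is a
first-order sentence true in `ℝ`, hence true in `R*` by elementarity. Nonprincipality
transfers `∀ x, x ∈ {n} → ¬ n < x` with the real parameter `n`: an `N` above every
standard `n` lies in no `{n}*`.
-/

namespace FirstOrder.Language.ElementaryEmbedding

variable {L : Language} {M N : Type*} [L.Structure M] [L.Structure N]

theorem realize_of_forall_realize (f : M ↪ₑ[L] N) {α : Type*} (φ : L.BoundedFormula α 1)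
    (v : α → M) (h : ∀ x : M, φ.Realize v (Fin.snoc default x)) (y : N) :
    φ.Realize (f ∘ v) (Fin.snoc default y) := by
  have := (f.map_formula φ.all v).mpr (BoundedFormula.realize_all.mpr h)
  exact BoundedFormula.realize_all.mp this y

end FirstOrder.Language.ElementaryEmbedding

namespace NatSetLang

variable {M : Type*} [natSetLang.Structure M]

variable (M) in
/-- The nonstandard extension `X*` of `X ⊆ ℕ` in a `natSetLang`-structure. -/
def starSet (X : Set ℕ) : Set M :=
  {a | Structure.RelMap (show natSetLang.Relations 1 from X) ![a]}

theorem starSet_real (X : Set ℕ) : starSet ℝ X = (Nat.cast '' X : Set ℝ) :=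
  rfl

def memForm {α : Type*} (X : Set ℕ) : natSetLang.BoundedFormula α 1 :=
  Relations.boundedFormula₁ (show natSetLang.Relations 1 from X) (Term.var (Sum.inr 0))

def ltForm : natSetLang.BoundedFormula (Fin 1) 1 :=
  Relations.boundedFormula₂ (show natSetLang.Relations 2 from ())
    (Term.var (Sum.inl 0)) (Term.var (Sum.inr 0))

@[simp]
theorem realize_memForm {α : Type*} (X : Set ℕ) (v : α → M) (xs : Fin 0 → M) (a : M) :
    (memForm X).Realize v (Fin.snoc xs a) ↔ a ∈ starSet M X :=
  BoundedFormula.realize_rel₁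

@[simp]
theorem realize_ltForm (v : Fin 1 → M) (xs : Fin 0 → M) (a : M) :
    ltForm.Realize v (Fin.snoc xs a) ↔
      Structure.RelMap (show natSetLang.Relations 2 from ()) ![v 0, a] :=
  BoundedFormula.realize_rel₂

section Transfer

open BoundedFormula

variable (f : ℝ ↪ₑ[natSetLang] M)
include f

theorem starSet_mono {X Y : Set ℕ} (h : X ⊆ Y) : starSet M X ⊆ starSet M Y := by
  intro a ha
  have := f.realize_of_forall_realize ((memForm X).imp (memForm Y)) Empty.elim
    (by
      simp only [realize_imp, realize_memForm, starSet_real]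
      exact fun x => (Set.image_mono h ·)) a
  simp only [realize_imp, realize_memForm] at this
  exact this ha

theorem starSet_inter_subset (X Y : Set ℕ) :
    starSet M X ∩ starSet M Y ⊆ starSet M (X ∩ Y) := by
  rintro a ⟨haX, haY⟩
  have := f.realize_of_forall_realize ((memForm X).imp ((memForm Y).imp (memForm (X ∩ Y))))
    Empty.elim (by
      simp only [realize_imp, realize_memForm, starSet_real, Set.image_inter Nat.cast_injective]
      exact fun x => And.intro) a
  simp only [realize_imp, realize_memForm] at this
  exact this haX haY

theorem starSet_empty : starSet M (∅ : Set ℕ) = ∅ := by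
  refine Set.eq_empty_of_forall_notMem fun a => ?_
  have := f.realize_of_forall_realize (memForm ∅).not Empty.elim
    (by
      simp only [realize_not, realize_memForm, starSet_real, Set.image_empty]
      exact fun x => id) a
  simpa only [realize_not, realize_memForm] using this

theorem starSet_univ_subset_union_compl (X : Set ℕ) :
    starSet M Set.univ ⊆ starSet M X ∪ starSet M Xᶜ := by
  intro a ha
  have := f.realize_of_forall_realize ((memForm Set.univ).imp (memForm X ⊔ memForm Xᶜ))
    Empty.elim (by
      simp only [realize_imp, realize_sup, realize_memForm, starSet_real, ← Set.mem_union,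
        ← Set.image_union, Set.union_compl_self]
      exact fun x => id) a
  simp only [realize_imp, realize_sup, realize_memForm] at this
  exact this ha

theorem not_lt_of_mem_starSet_singleton (n : ℕ) {a : M} (ha : a ∈ starSet M {n}) :
    ¬ Structure.RelMap (show natSetLang.Relations 2 from ()) ![f n, a] := by
  have := f.realize_of_forall_realize ((memForm {n}).imp ltForm.not) ![(n : ℝ)]
    (by
      simp only [realize_imp, realize_not, realize_memForm, realize_ltForm, starSet_real,
        Set.image_singleton, Set.mem_singleton_iff]
      rintro x rfl
      exact lt_irrefl _) a
  simp only [realize_imp, realize_not, realize_memForm, realize_ltForm] at this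
  simpa using this ha

def ultrafilterAt (N : M) (hN : N ∈ starSet M Set.univ) : Ultrafilter ℕ :=
  Ultrafilter.ofComplNotMemIff
    { sets := {X | N ∈ starSet M X}
      univ_sets := hN
      sets_of_superset := fun hX hXY => starSet_mono f hXY hX
      inter_sets := fun hX hY => starSet_inter_subset f _ _ ⟨hX, hY⟩ }
    fun X => by
      refine ⟨(starSet_univ_subset_union_compl f X hN).resolve_right, ?_⟩
      intro hX hXc
      have : N ∈ starSet M (X ∩ Xᶜ) := starSet_inter_subset f _ _ ⟨hX, hXc⟩
      rw [Set.inter_compl_self, starSet_empty f] at this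
      exact this

theorem mem_ultrafilterAt {N : M} {hN : N ∈ starSet M Set.univ} {X : Set ℕ} :
    X ∈ ultrafilterAt f N hN ↔ N ∈ starSet M X :=
  Iff.rfl

end Transfer

end NatSetLang

/-- If R* is an elementary extension of (ℝ; +, ·, <, (A)_{A⊆ℕ}) and N is an element of
ℕ* greater than every standard natural number, then μ = {X ⊆ ℕ : N ∈ X*} is a
nonprincipal ultrafilter on ℕ. -/
theorem ultrafilter_from_hyperreal (R : Type) [natSetLang.Structure R]
    (f : ℝ ↪ₑ[natSetLang] R) (N : R)
    (hN : Structure.RelMap (show natSetLang.Relations 1 from (Set.univ : Set ℕ)) ![N])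
    (hbig : ∀ n : ℕ, Structure.RelMap (show natSetLang.Relations 2 from ()) ![f (n : ℝ), N]) :
    ∃ u : Ultrafilter ℕ,
      (∀ X : Set ℕ, X ∈ (u : Filter ℕ) ↔
        Structure.RelMap (show natSetLang.Relations 1 from X) ![N]) ∧
      ∀ n : ℕ, ({n} : Set ℕ) ∉ (u : Filter ℕ) :=
  ⟨NatSetLang.ultrafilterAt f N hN, fun _ => NatSetLang.mem_ultrafilterAt f,
    fun n hn => NatSetLang.not_lt_of_mem_starSet_singleton f n hn (hbig n)⟩
end

section
/- If κ^{<κ} = κ holds for every uncountable regular cardinal κ, then the generalized continuum hypothesis holds. -/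
open FirstOrder Language Cardinal

universe u v w

/-- If κ^{<κ} = κ holds for every uncountable regular cardinal κ, then the generalized
continuum hypothesis holds. -/
theorem gch_of_powerlt_eq_self
    (h : ∀ κ : Cardinal.{u}, ℵ₀ < κ → κ.IsRegular → κ ^< κ = κ) :
    ∀ l : Cardinal.{u}, ℵ₀ ≤ l → 2 ^ l = Order.succ l := by
  intro l hl
  have hreg := Cardinal.isRegular_succ hl
  have hlt : ℵ₀ < Order.succ l := hl.trans_lt (Order.lt_succ l)
  have hk := h (Order.succ l) hlt hreg
  apply le_antisymm
  · calc 2 ^ l ≤ (Order.succ l) ^ l := by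
          apply Cardinal.power_le_power_right
          exact le_trans (le_trans (Cardinal.nat_lt_aleph0 2 |>.le) hl) (Order.le_succ l)
       _ ≤ (Order.succ l) ^< (Order.succ l) :=
          Cardinal.le_powerlt _ (Order.lt_succ l)
       _ = Order.succ l := hk
  · exact Order.succ_le_of_lt (Cardinal.cantor l)
end
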